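/- If t is an increasing tree on [n] with embedding φ_t into the Ulam–Harris tree, then the map v ↦ b(φ_t(v)), where b = ℓ^{-1} ∘ f_{j} ∘ ℓ, also encodes an increasing tree on [n]: it satisfies the root condition, the parent-monotonicity condition, and the sibling-monotonicity condition. -/

import Mathlib

/-- The child-sibling encoding `ℓ`. -/
def ell (u : List ℕ+) : List Bool :=
  u.flatMap (fun m => true :: List.replicate ((m : ℕ) - 1) false)

/-- `f_j` complements coordinates `2` through `j` of a binary string. -/
def fstr (j : ℕ) (s : List Bool) : List Bool :=
  s.mapIdx (fun i b => if 0 < i ∧ i < j then !b else b)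

/-- `φ : [n] → 𝒰` encodes an increasing tree on `[n]`:
(a) the root `1` is mapped to the root `∅` of the Ulam–Harris tree;
(b) parent condition: if `φ(v) = u ⌢ (m)` then the parent `u` is the image of some
vertex `w < v`;
(c) sibling condition: if `φ(v) = u ⌢ (m)` with `m > 1` then the left sibling
`u ⌢ (m-1)` is the image of some vertex `w < v`. -/
def IsIncEmb (n : ℕ) (φ : ℕ → List ℕ+) : Prop :=
  φ 1 = [] ∧
  (∀ v, 2 ≤ v → v ≤ n → ∀ u : List ℕ+, ∀ m : ℕ+, φ v = u ++ [m] →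
    ∃ w, 1 ≤ w ∧ w < v ∧ w ≤ n ∧ φ w = u) ∧
  (∀ v, 2 ≤ v → v ≤ n → ∀ u : List ℕ+, ∀ m : ℕ+, φ v = u ++ [m] → 1 < m →
    ∃ w, 1 ≤ w ∧ w < v ∧ w ≤ n ∧ φ w = u ++ [m - 1])

/-!
Dropping the last letter of `ℓ x` for a nonempty word `x = u ⌢ (m)` gives `ℓ u` if `m = 1` and
`ℓ (u ⌢ (m-1))` otherwise, i.e. the encoding of the parent or of the left sibling. Iterating, in an
increasing tree every word whose encoding is a proper prefix of `ℓ (φ v)` is the image of a vertex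
smaller than `v`. Since `f_j` is a length-preserving involution that respects prefixes, `b` is an
involution, and the parent or left sibling of `b (φ v)` is `b y` for a word `y` whose encoding is
a proper prefix of `ℓ (φ v)`.
-/

@[simp]
lemma ell_nil : ell [] = [] := rfl

@[simp]
lemma ell_cons (m : ℕ+) (u : List ℕ+) :
    ell (m :: u) = true :: (List.replicate ((m : ℕ) - 1) false ++ ell u) := by
  simp [ell]

lemma ell_append_singleton (u : List ℕ+) (m : ℕ+) :
    ell (u ++ [m]) = ell u ++ true :: List.replicate ((m : ℕ) - 1) false := by
  simp [ell]

lemma ell_append_one (u : List ℕ+) : ell (u ++ [1]) = ell u ++ [true] := by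
  simp [ell_append_singleton]

lemma ell_append_sub_one {m : ℕ+} (hm : 1 < m) (u : List ℕ+) :
    ell (u ++ [m]) = ell (u ++ [m - 1]) ++ [false] := by
  have hsub : ((m - 1 : ℕ+) : ℕ) = (m : ℕ) - 1 := by
    rw [PNat.sub_coe, if_pos hm, PNat.one_coe]
  have hm2 : (m : ℕ) - 1 = (m : ℕ) - 1 - 1 + 1 := by have : 1 < (m : ℕ) := hm; omega
  rw [ell_append_singleton, ell_append_singleton, hsub, hm2, List.replicate_succ']
  simp

lemma ell_ne_false_cons (u : List ℕ+) (s : List Bool) : ell u ≠ false :: s := by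
  cases u <;> simp

lemma replicate_false_append_inj {a b : ℕ} {s t : List Bool}
    (hs : ∀ r, s ≠ false :: r) (ht : ∀ r, t ≠ false :: r)
    (h : List.replicate a false ++ s = List.replicate b false ++ t) : a = b ∧ s = t := by
  induction a generalizing b with
  | zero =>
    cases b with
    | zero => exact ⟨rfl, h⟩
    | succ b => exact absurd h (hs _)
  | succ a ih =>
    cases b with
    | zero => exact absurd h.symm (ht _)
    | succ b =>
      obtain ⟨hab, hst⟩ := ih (List.cons_injective h)
      exact ⟨congrArg (· + 1) hab, hst⟩

lemma ell_injective : Function.Injective ell := by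
  intro u
  induction u with
  | nil =>
    rintro (_ | ⟨m, w⟩) h
    · rfl
    · simp at h
  | cons m u ih =>
    rintro (_ | ⟨m', w⟩) h
    · simp at h
    · rw [ell_cons, ell_cons, List.cons.injEq] at h
      obtain ⟨hm, huw⟩ :=
        replicate_false_append_inj (ell_ne_false_cons u) (ell_ne_false_cons w) h.2
      have : m = m' := PNat.coe_injective (by have := m.pos; have := m'.pos; omega)
      rw [this, ih huw]

@[simp]
lemma fstr_length (j : ℕ) (s : List Bool) : (fstr j s).length = s.length := by
  simp [fstr]

lemma fstr_involutive (j : ℕ) : Function.Involutive (fstr j) := by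
  intro s
  apply List.ext_getElem (by simp)
  intro i _ _
  simp only [fstr, List.getElem_mapIdx]
  split <;> simp

lemma List.IsPrefix.fstr (j : ℕ) {s t : List Bool} (h : s <+: t) : fstr j s <+: fstr j t := by
  obtain ⟨r, rfl⟩ := h
  refine List.prefix_iff_eq_take.mpr (List.ext_getElem (by simp) fun i hi _ => ?_)
  replace hi : i < s.length := by simpa using hi
  simp [_root_.fstr, List.getElem_append_left hi]

namespace IsIncEmb

variable {n : ℕ} {φ : ℕ → List ℕ+}

lemma exists_ell_eq_append_singleton (hφ : IsIncEmb n φ) {v : ℕ} (hv2 : 2 ≤ v) (hvn : v ≤ n)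
    (hne : φ v ≠ []) :
    ∃ w c, 1 ≤ w ∧ w < v ∧ w ≤ n ∧ ell (φ v) = ell (φ w) ++ [c] := by
  obtain ⟨u, m, hum⟩ := (List.eq_nil_or_concat (φ v)).resolve_left hne
  rw [List.concat_eq_append] at hum
  rcases (one_le : 1 ≤ m).eq_or_lt with rfl | hm
  · obtain ⟨w, hw1, hwv, hwn, hwu⟩ := hφ.2.1 v hv2 hvn u 1 hum
    exact ⟨w, true, hw1, hwv, hwn, by rw [hum, hwu, ell_append_one]⟩
  · obtain ⟨w, hw1, hwv, hwn, hwu⟩ := hφ.2.2 v hv2 hvn u m hum hm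
    exact ⟨w, false, hw1, hwv, hwn, by rw [hum, hwu, ell_append_sub_one hm]⟩

lemma exists_eq_of_ell_prefix (hφ : IsIncEmb n φ) {v : ℕ} (hv2 : 2 ≤ v) (hvn : v ≤ n)
    {y : List ℕ+} (hpre : ell y <+: ell (φ v)) (hlt : (ell y).length < (ell (φ v)).length) :
    ∃ w, 1 ≤ w ∧ w < v ∧ w ≤ n ∧ φ w = y := by
  induction v using Nat.strong_induction_on with
  | _ v ih =>
    have hne : φ v ≠ [] := by
      rintro h
      simp [h] at hlt
    obtain ⟨w, c, hw1, hwv, hwn, hstep⟩ := hφ.exists_ell_eq_append_singleton hv2 hvn hne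
    rw [hstep, List.length_append, List.length_singleton] at hlt
    rw [hstep] at hpre
    have hpre' : ell y <+: ell (φ w) :=
      List.prefix_of_prefix_length_le hpre (List.prefix_append _ _) (by omega)
    rcases (Nat.lt_succ_iff.mp hlt).eq_or_lt with heq | hlt'
    · exact ⟨w, hw1, hwv, hwn, ell_injective (hpre'.eq_of_length heq).symm⟩
    · have hw2 : 2 ≤ w := by
        by_contra! hw
        obtain rfl : w = 1 := by omega
        simp [hφ.1] at hlt'
      obtain ⟨w', hw'1, hw'w, hw'n, hw'y⟩ := ih w hwv hw2 hwn hpre' hlt'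
      exact ⟨w', hw'1, hw'w.trans hwv, hw'n, hw'y⟩

lemma exists_flip_eq_of_ell_prefix (hφ : IsIncEmb n φ) {j : ℕ} {b : List ℕ+ → List ℕ+}
    (hb : ∀ x, ell (b x) = fstr j (ell x)) {v : ℕ} (hv2 : 2 ≤ v) (hvn : v ≤ n)
    {z : List ℕ+} (hpre : ell z <+: ell (b (φ v)))
    (hlt : (ell z).length < (ell (b (φ v))).length) :
    ∃ w, 1 ≤ w ∧ w < v ∧ w ≤ n ∧ b (φ w) = z := by
  have hbb : Function.Involutive b := fun x =>
    ell_injective (by rw [hb, hb, fstr_involutive])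
  have hpre' : ell (b z) <+: ell (φ v) := by
    rw [← hbb (φ v), hb, hb (b (φ v))]
    exact hpre.fstr j
  have hlt' : (ell (b z)).length < (ell (φ v)).length := by
    rwa [← hbb (φ v), hb, hb (b (φ v)), fstr_length, fstr_length]
  obtain ⟨w, hw1, hwv, hwn, hw⟩ := hφ.exists_eq_of_ell_prefix hv2 hvn hpre' hlt'
  exact ⟨w, hw1, hwv, hwn, by rw [hw, hbb]⟩

end IsIncEmb

theorem flip_of_incEmb_general (n j : ℕ) (b : List ℕ+ → List ℕ+)
    (hb : ∀ x, ell (b x) = fstr j (ell x))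
    (φ : ℕ → List ℕ+) (hφ : IsIncEmb n φ) :
    IsIncEmb n (fun v => b (φ v)) := by
  refine ⟨ell_injective (by rw [hb, hφ.1]; rfl), ?_, ?_⟩
  · intro v hv2 hvn u m hum
    refine hφ.exists_flip_eq_of_ell_prefix hb hv2 hvn ?_ ?_ <;>
      simp [hum, ell_append_singleton]
  · intro v hv2 hvn u m hum hm
    refine hφ.exists_flip_eq_of_ell_prefix hb hv2 hvn ?_ ?_ <;>
      simp [hum, ell_append_sub_one hm]

/-- If `φ_t` encodes an increasing tree on `[n]` and `b = ℓ⁻¹ ∘ f_j ∘ ℓ`, then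
`v ↦ b(φ_t(v))` also encodes an increasing tree on `[n]`: it satisfies the root
condition, the parent-monotonicity condition and the sibling-monotonicity condition. -/
theorem flip_of_incEmb (n j : ℕ) (hj : 2 ≤ j) (b : List ℕ+ → List ℕ+)
    (hb : ∀ x, ell (b x) = fstr j (ell x))
    (φ : ℕ → List ℕ+) (hφ : IsIncEmb n φ) :
    IsIncEmb n (fun v => b (φ v)) :=
  flip_of_incEmb_general n j b hb φ hφ
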